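/- arXiv:1312.2663 — 2 statements merged into one kernel-verified Lean document; each statement's English description precedes it below -/
import Mathlib

section
/- Let X be a real locally convex Hausdorff topological vector space and S₁, …, Sₙ pointed convex cones in X that are non-conflicting (−S_j ⊄ cl(S₁ + ⋯ + Sₙ) for all j). Assume each S_i has nonempty interior. Then there exists a nonzero continuous linear functional f on X such that f(x) > 0 for every x ∈ int S_i and every i = 1, …, n. -/
/-!
Let `K` be the closed convex cone generated by `S₁ + ⋯ + Sₙ`. Non-conflict gives a point `z` outside
`K`, and Hahn–Banach separation of a point from a closed cone gives a continuous functional `f ≥ 0`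
on `K` with `f z < 0`; in particular `f ≠ 0`. A nonzero functional is an open map, so it cannot
attain its minimum over `S_i` at an interior point: `f > 0` on `int S_i`.
-/

open Set

namespace PointedCone

variable {E : Type*} [AddCommMonoid E] [Module ℝ E]

def ofSet (s : Set E) (zero_mem : (0 : E) ∈ s)
    (add_mem : ∀ x ∈ s, ∀ y ∈ s, x + y ∈ s)
    (smul_mem : ∀ x ∈ s, ∀ a : ℝ, 0 ≤ a → a • x ∈ s) : PointedCone ℝ E where
  carrier := s
  add_mem' hx hy := add_mem _ hx _ hy
  zero_mem' := zero_mem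
  smul_mem' c x hx := smul_mem x hx c c.2

end PointedCone

theorem Submodule.exists_sum_eq_of_mem_iSup {ι R M : Type*} [Fintype ι] [Semiring R]
    [AddCommMonoid M] [Module R M] {p : ι → Submodule R M} {x : M} (hx : x ∈ ⨆ i, p i) :
    ∃ y : ι → M, (∀ i, y i ∈ p i) ∧ x = ∑ i, y i := by
  classical
  obtain ⟨μ, rfl⟩ := (mem_iSup_finset_iff_exists_sum (s := .univ) p x).1 (by simpa using hx)
  exact ⟨fun i => μ i, fun i => (μ i).2, rfl⟩

theorem ContinuousLinearMap.lt_apply_of_mem_interior {𝕜 E : Type*} [Field 𝕜] [LinearOrder 𝕜]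
    [IsStrictOrderedRing 𝕜] [TopologicalSpace 𝕜] [OrderTopology 𝕜]
    [AddCommGroup E] [TopologicalSpace E] [ContinuousAdd E] [Module 𝕜 E] [ContinuousSMul 𝕜 E]
    {f : StrongDual 𝕜 E} (hf : f ≠ 0) {s : Set E} {c : 𝕜} (hs : ∀ y ∈ s, c ≤ f y) {x : E}
    (hx : x ∈ interior s) : c < f x := by
  have himage : f '' interior s ⊆ interior (Ici c) :=
    (f.isOpenMap_of_ne_zero hf).image_interior_subset s |>.trans
      (interior_mono (image_subset_iff.2 hs))
  rw [interior_Ici] at himage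
  exact himage (mem_image_of_mem f hx)

theorem stmt7_general {X : Type*} [AddCommGroup X] [Module ℝ X] [TopologicalSpace X]
    [IsTopologicalAddGroup X] [ContinuousSMul ℝ X] [LocallyConvexSpace ℝ X]
    (n : ℕ) (hn : 0 < n) (S : Fin n → Set X)
    (hcone : ∀ j, ∀ s ∈ S j, ∀ α : ℝ, 0 ≤ α → α • s ∈ S j)
    (hconv : ∀ j, ∀ x ∈ S j, ∀ y ∈ S j, x + y ∈ S j)
    (hnc : ∀ j, ¬ (-(S j) ⊆
      closure {x : X | ∃ y : Fin n → X, (∀ i, y i ∈ S i) ∧ x = ∑ i, y i})) :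
    ∃ f : X →L[ℝ] ℝ, f ≠ 0 ∧ ∀ i, ∀ x ∈ interior (S i), 0 < f x := by
  have zero_mem : ∀ j, (0 : X) ∈ S j := fun j => by
    obtain ⟨s, hs, -⟩ := not_subset.1 (hnc j)
    simpa using hcone j _ hs 0 le_rfl
  let K : Fin n → PointedCone ℝ X := fun j => .ofSet (S j) (zero_mem j) (hconv j) (hcone j)
  obtain ⟨z, -, hz⟩ := not_subset.1 (hnc ⟨0, hn⟩)
  have hzK : z ∉ Submodule.closure (⨆ j, K j) := fun h =>
    hz (closure_mono (fun _ hx => Submodule.exists_sum_eq_of_mem_iSup hx) h)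
  obtain ⟨f, hf_nonneg, hfz⟩ := ProperCone.hyperplane_separation_point _ hzK
  have hf : f ≠ 0 := by
    rintro rfl
    simp at hfz
  refine ⟨f, hf, fun i x hx => f.lt_apply_of_mem_interior hf (fun y hy => hf_nonneg y ?_) hx⟩
  exact subset_closure (le_iSup K i hy)

theorem stmt7 {X : Type*} [AddCommGroup X] [Module ℝ X] [TopologicalSpace X]
    [IsTopologicalAddGroup X] [ContinuousSMul ℝ X] [LocallyConvexSpace ℝ X] [T2Space X]
    (n : ℕ) (hn : 0 < n) (S : Fin n → Set X)
    (hcone : ∀ j, ∀ s ∈ S j, ∀ α : ℝ, 0 ≤ α → α • s ∈ S j)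
    (hconv : ∀ j, ∀ x ∈ S j, ∀ y ∈ S j, x + y ∈ S j)
    (hpointed : ∀ j, S j ∩ (-(S j)) = {0})
    (hint : ∀ j, (interior (S j)).Nonempty)
    (hnc : ∀ j, ¬ (-(S j) ⊆
      closure {x : X | ∃ y : Fin n → X, (∀ i, y i ∈ S i) ∧ x = ∑ i, y i})) :
    ∃ f : X →L[ℝ] ℝ, f ≠ 0 ∧ ∀ i, ∀ x ∈ interior (S i), 0 < f x :=
  stmt7_general n hn S hcone hconv hnc
end

section
/- Let (E, ξ) = ind(Eₙ, ξₙ) be a Hausdorff locally convex inductive limit of an increasing sequence of locally convex spaces with continuous inclusions. For each n, let Sₙ be a pointed convex cone in (Eₙ, ξₙ) with nonempty ξₙ-interior, and suppose the sequence (Sₙ) is non-conflicting: for each n and each j ≤ n, −S_j ⊄ cl_{ξₙ}(S₁ + ⋯ + Sₙ). If A ⊆ E₁ is countably compact in (E₁, ξ₁), then for every n there exists a₀ ∈ A that is simultaneously weakly efficient with respect to S₁, …, Sₙ, i.e., (A − a₀) ∩ (−int_{ξᵢ} Sᵢ) = ∅ for i = 1, …, n. -/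
/-!
Non-conflict of `S₀` with `S₀ + ⋯ + Sₙ` puts a point `-s₀` of `-S₀` outside the closure of that
convex cone, so Hahn–Banach yields a continuous functional `f` on `Eₙ` that is nonnegative on every
`Sᵢ` (`i ≤ n`) and positive at `s₀`. Moving from an interior point of `Sᵢ` a little in the
direction `-s₀` stays in `Sᵢ`, hence `f` is strictly positive on each `int Sᵢ`. Restricted to `E₀`,
`f` is continuous and so attains its minimum on the countably compact set `A`; at a minimizer `a₀`,
`a - a₀ ∈ -int Sᵢ` would force `f a < f a₀`.
-/

open Filter Topology

section CountablyCompact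

variable {X : Type*} [TopologicalSpace X] {A : Set X}

theorem isCountablyCompact_of_forall_seq_mem
    (h : ∀ u : ℕ → X, (∀ k, u k ∈ A) → ∃ a ∈ A, MapClusterPt a atTop u) :
    IsCountablyCompact A := by
  refine IsCountablyCompact.of_seq_clusterPt fun u hu => ?_
  obtain ⟨N, hN⟩ := eventually_atTop.1 hu
  obtain ⟨a, ha, hcl⟩ := h (fun k => u (k + N)) fun k => hN _ (Nat.le_add_left N k)
  exact ⟨a, ha, ClusterPt.mono hcl (tendsto_map.comp (tendsto_add_atTop_nat N))⟩

theorem IsCountablyCompact.exists_isMinOn {α : Type*} [TopologicalSpace α] [LinearOrder α]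
    [ClosedIicTopology α] [HereditarilyLindelofSpace α] (hA : IsCountablyCompact A)
    (hne : A.Nonempty) {φ : X → α} (hφ : Continuous φ) : ∃ a ∈ A, IsMinOn φ A a := by
  obtain ⟨_, ⟨a, ha, rfl⟩, hmin⟩ := (hA.image hφ).isCompact.exists_isLeast (hne.image φ)
  exact ⟨a, ha, fun b hb => hmin ⟨b, hb, rfl⟩⟩

end CountablyCompact

section MinkowskiSum

variable {𝕜 M : Type*} [Semiring 𝕜] [PartialOrder 𝕜] [AddCommMonoid M] [Module 𝕜 M]

theorem convex_of_smul_mem_of_add_mem {S : Set M} (hsmul : ∀ x ∈ S, ∀ α : 𝕜, 0 ≤ α → α • x ∈ S)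
    (hadd : ∀ x ∈ S, ∀ y ∈ S, x + y ∈ S) : Convex 𝕜 S :=
  fun x hx y hy a b ha hb _ => hadd _ (hsmul x hx a ha) _ (hsmul y hy b hb)

/-- The set `T₀ + ⋯ + Tₙ`. -/
def minkowskiSum (n : ℕ) (T : ∀ i, i ≤ n → Set M) : Set M :=
  {x | ∃ y : ℕ → M, (∀ i, ∀ hi : i ≤ n, y i ∈ T i hi) ∧ x = ∑ i ∈ Finset.range (n + 1), y i}

variable {n : ℕ} {T : ∀ i, i ≤ n → Set M}

theorem convex_minkowskiSum (hT : ∀ i hi, Convex 𝕜 (T i hi)) : Convex 𝕜 (minkowskiSum n T) := by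
  rintro _ ⟨y, hy, rfl⟩ _ ⟨y', hy', rfl⟩ a b ha hb hab
  refine ⟨fun i => a • y i + b • y' i, fun i hi => hT i hi (hy i hi) (hy' i hi) ha hb hab, ?_⟩
  rw [Finset.smul_sum, Finset.smul_sum, ← Finset.sum_add_distrib]

theorem smul_mem_minkowskiSum (hT : ∀ i hi, ∀ x ∈ T i hi, ∀ α : 𝕜, 0 ≤ α → α • x ∈ T i hi)
    {x : M} (hx : x ∈ minkowskiSum n T) {α : 𝕜} (hα : 0 ≤ α) : α • x ∈ minkowskiSum n T := by
  obtain ⟨y, hy, rfl⟩ := hx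
  exact ⟨fun i => α • y i, fun i hi => hT i hi _ (hy i hi) α hα, Finset.smul_sum⟩

theorem subset_minkowskiSum (h0 : ∀ i hi, (0 : M) ∈ T i hi) (j : ℕ) (hj : j ≤ n) :
    T j hj ⊆ minkowskiSum n T := by
  intro x hx
  refine ⟨fun i => if i = j then x else 0, fun i hi => ?_, ?_⟩
  · dsimp only
    split_ifs with h
    · subst h; exact hx
    · exact h0 i hi
  · rw [Finset.sum_ite_eq' (Finset.range (n + 1)) j, if_pos (Finset.mem_range_succ_iff.2 hj)]

end MinkowskiSum

section Separation

variable {F : Type*} [AddCommGroup F] [Module ℝ F] [TopologicalSpace F]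

theorem exists_dual_nonneg_of_notMem_closure [IsTopologicalAddGroup F] [ContinuousSMul ℝ F]
    [LocallyConvexSpace ℝ F] {K : Set F} (hK : Convex ℝ K) (h0 : 0 ∈ K)
    (hsmul : ∀ x ∈ K, ∀ α : ℝ, 0 ≤ α → α • x ∈ K) {z : F} (hz : z ∉ closure K) :
    ∃ f : StrongDual ℝ F, (∀ x ∈ K, 0 ≤ f x) ∧ f z < 0 := by
  obtain ⟨f, u, hfz, hfK⟩ := geometric_hahn_banach_point_closed hK.closure isClosed_closure hz
  have hu : u < 0 := by simpa using hfK 0 (subset_closure h0)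
  refine ⟨f, fun x hx => ?_, hfz.trans hu⟩
  by_contra! hneg
  have := hfK _ (subset_closure (hsmul x hx (u / f x) (div_nonneg_of_nonpos hu.le hneg.le)))
  rw [map_smul, smul_eq_mul, div_mul_cancel₀ _ hneg.ne] at this
  exact lt_irrefl u this

theorem exists_dual_nonneg_on_minkowskiSum [IsTopologicalAddGroup F] [ContinuousSMul ℝ F]
    [LocallyConvexSpace ℝ F] {n : ℕ} {T : ∀ i, i ≤ n → Set F} (hconv : ∀ i hi, Convex ℝ (T i hi))
    (hsmul : ∀ i hi, ∀ x ∈ T i hi, ∀ α : ℝ, 0 ≤ α → α • x ∈ T i hi) (h0 : ∀ i hi, 0 ∈ T i hi)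
    {z : F} (hz : z ∉ closure (minkowskiSum n T)) :
    ∃ f : StrongDual ℝ F, (∀ i hi, ∀ x ∈ T i hi, 0 ≤ f x) ∧ f z < 0 := by
  obtain ⟨f, hf, hfz⟩ := exists_dual_nonneg_of_notMem_closure (convex_minkowskiSum hconv)
    (subset_minkowskiSum h0 0 n.zero_le (h0 0 n.zero_le))
    (fun _ hx _ hα => smul_mem_minkowskiSum hsmul hx hα) hz
  exact ⟨f, fun i hi x hx => hf x (subset_minkowskiSum h0 i hi hx), hfz⟩

theorem LinearMap.pos_of_mem_interior [ContinuousAdd F] [ContinuousSMul ℝ F] (g : F →ₗ[ℝ] ℝ)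
    {S : Set F} (hg : ∀ x ∈ S, 0 ≤ g x) {v : F} (hv : 0 < g v) {x : F} (hx : x ∈ interior S) :
    0 < g x := by
  have hcont : Continuous fun t : ℝ => x + t • v := by fun_prop
  have hnear : ∀ᶠ t in 𝓝[<] (0 : ℝ), x + t • v ∈ S :=
    nhdsWithin_le_nhds <| (hcont.continuousAt.eventually_mem
      (by simpa using isOpen_interior.mem_nhds hx)).mono fun _ h => interior_subset h
  obtain ⟨t, hS, ht⟩ := (hnear.and self_mem_nhdsWithin).exists
  have := hg _ hS
  rw [map_add, map_smul, smul_eq_mul] at this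
  linarith [mul_neg_of_neg_of_pos ht hv]

end Separation

theorem Submodule.continuous_inclusion_of_monotone {R E : Type*} [Semiring R] [AddCommMonoid E]
    [Module R E] {p : ℕ → Submodule R E} (hmono : Monotone p) (τ : ∀ n, TopologicalSpace (p n))
    (hcont : ∀ n, @Continuous _ _ (τ n) (τ (n + 1)) (Submodule.inclusion (hmono n.le_succ)))
    {i k : ℕ} (h : i ≤ k) : @Continuous _ _ (τ i) (τ k) (Submodule.inclusion (hmono h)) := by
  induction k, h using Nat.le_induction with
  | base => exact @continuous_id _ (τ i)
  | succ k _ ih => exact @Continuous.comp _ _ _ (τ i) (τ k) (τ (k + 1)) _ _ (hcont k) ih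

theorem stmt10_general {E : Type*} [AddCommGroup E] [Module ℝ E]
    (p : ℕ → Submodule ℝ E) (hmono : Monotone p)
    (τ : (n : ℕ) → TopologicalSpace (p n))
    (htag : ∀ n, @IsTopologicalAddGroup (p n) (τ n) _)
    (hsmul : ∀ n, @ContinuousSMul ℝ (p n) _ _ (τ n))
    (hlc : ∀ n, @LocallyConvexSpace ℝ (p n) _ _ _ _ (τ n))
    (hcont : ∀ n, @Continuous _ _ (τ n) (τ (n + 1))
      (Submodule.inclusion (hmono (Nat.le_succ n))))
    (S : (n : ℕ) → Set (p n))
    (hcone : ∀ n, ∀ s ∈ S n, ∀ α : ℝ, 0 ≤ α → α • s ∈ S n)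
    (hconv : ∀ n, ∀ x ∈ S n, ∀ y ∈ S n, x + y ∈ S n)
    (hnc : ∀ n, ∀ j, ∀ hj : j ≤ n,
      ¬ (-(Submodule.inclusion (hmono hj) '' S j) ⊆
        @closure _ (τ n) {x : p n | ∃ y : ℕ → p n,
          (∀ i, ∀ hi : i ≤ n, y i ∈ Submodule.inclusion (hmono hi) '' S i) ∧
          x = ∑ i ∈ Finset.range (n + 1), y i}))
    (A : Set (p 0)) (hAne : A.Nonempty)
    (hcc : ∀ u : ℕ → p 0, (∀ k, u k ∈ A) →
      ∃ a ∈ A, @MapClusterPt _ (τ 0) _ a Filter.atTop u) :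
    ∀ n, ∃ a₀ ∈ A, ∀ i, i ≤ n → ∀ a ∈ A,
      Submodule.inclusion (hmono (Nat.zero_le i)) a
        - Submodule.inclusion (hmono (Nat.zero_le i)) a₀
          ∉ -(@interior _ (τ i) (S i)) := by
  intro n
  let _ := τ 0
  let _ := τ n
  have _ := htag n
  have _ := hsmul n
  have _ := hlc n
  set T : ∀ i, i ≤ n → Set (p n) := fun i hi => Submodule.inclusion (hmono hi) '' S i
  -- Non-conflict makes every `Sᵢ` nonempty, so `0 ∈ Sᵢ`.
  have hT0 : ∀ i hi, (0 : p n) ∈ T i hi := by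
    intro i hi
    obtain ⟨_, ⟨s, hs, -⟩, -⟩ := Set.not_subset.1 (hnc n i hi)
    exact ⟨0, by simpa using hcone i s hs 0 le_rfl, map_zero _⟩
  have hT_smul : ∀ i hi, ∀ x ∈ T i hi, ∀ α : ℝ, 0 ≤ α → α • x ∈ T i hi := by
    rintro i - _ ⟨s, hs, rfl⟩ α hα
    exact ⟨α • s, hcone i s hs α hα, map_smul _ _ _⟩
  obtain ⟨z, ⟨s₀, -, hzs⟩, hz⟩ := Set.not_subset.1 (hnc n 0 n.zero_le)
  obtain ⟨f, hfT, hfz⟩ := exists_dual_nonneg_on_minkowskiSum (T := T)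
    (fun i _ => (convex_of_smul_mem_of_add_mem (hcone i) (hconv i)).linear_image _)
    hT_smul hT0 hz
  have hf_pos : ∀ i (hi : i ≤ n), ∀ x ∈ @interior _ (τ i) (S i),
      0 < f (Submodule.inclusion (hmono hi) x) := by
    intro i hi x hx
    let _ := τ i
    have _ := htag i
    have _ := hsmul i
    refine ((f : p n →ₗ[ℝ] ℝ) ∘ₗ Submodule.inclusion (hmono hi)).pos_of_mem_interior
      (fun s hs => hfT i hi _ ⟨s, hs, rfl⟩)
      (v := Submodule.inclusion (hmono i.zero_le) s₀) ?_ hx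
    change 0 < f (Submodule.inclusion (hmono n.zero_le) s₀)
    rw [hzs, map_neg]
    exact neg_pos.2 hfz
  obtain ⟨a₀, ha₀, hmin⟩ := (isCountablyCompact_of_forall_seq_mem hcc).exists_isMinOn hAne
    (f.continuous.comp (Submodule.continuous_inclusion_of_monotone hmono τ hcont n.zero_le))
  refine ⟨a₀, ha₀, fun i hi a ha hmem => ?_⟩
  rw [Set.mem_neg, neg_sub] at hmem
  have hlt := hf_pos i hi _ hmem
  rw [map_sub, map_sub, sub_pos] at hlt
  exact (isMinOn_iff.1 hmin a ha).not_gt hlt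

/-- Existence of simultaneously weakly efficient points with respect to finitely many
steps in an inductive limit of partially ordered locally convex spaces. -/
theorem stmt10 {E : Type*} [AddCommGroup E] [Module ℝ E]
    (p : ℕ → Submodule ℝ E) (hmono : Monotone p)
    (hproper : ∀ n, p n ≠ p (n + 1))
    (τ : (n : ℕ) → TopologicalSpace (p n))
    (htag : ∀ n, @IsTopologicalAddGroup (p n) (τ n) _)
    (hsmul : ∀ n, @ContinuousSMul ℝ (p n) _ _ (τ n))
    (hlc : ∀ n, @LocallyConvexSpace ℝ (p n) _ _ _ _ (τ n))
    (ht2 : ∀ n, @T2Space (p n) (τ n))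
    (hcont : ∀ n, @Continuous _ _ (τ n) (τ (n + 1))
      (Submodule.inclusion (hmono (Nat.le_succ n))))
    (S : (n : ℕ) → Set (p n))
    (hcone : ∀ n, ∀ s ∈ S n, ∀ α : ℝ, 0 ≤ α → α • s ∈ S n)
    (hconv : ∀ n, ∀ x ∈ S n, ∀ y ∈ S n, x + y ∈ S n)
    (hpointed : ∀ n, S n ∩ (-(S n)) = {0})
    (hint : ∀ n, (@interior _ (τ n) (S n)).Nonempty)
    (hnc : ∀ n, ∀ j, ∀ hj : j ≤ n,
      ¬ (-(Submodule.inclusion (hmono hj) '' S j) ⊆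
        @closure _ (τ n) {x : p n | ∃ y : ℕ → p n,
          (∀ i, ∀ hi : i ≤ n, y i ∈ Submodule.inclusion (hmono hi) '' S i) ∧
          x = ∑ i ∈ Finset.range (n + 1), y i}))
    (A : Set (p 0)) (hAne : A.Nonempty)
    (hcc : ∀ u : ℕ → p 0, (∀ k, u k ∈ A) →
      ∃ a ∈ A, @MapClusterPt _ (τ 0) _ a Filter.atTop u) :
    ∀ n, ∃ a₀ ∈ A, ∀ i, i ≤ n → ∀ a ∈ A,
      Submodule.inclusion (hmono (Nat.zero_le i)) a
        - Submodule.inclusion (hmono (Nat.zero_le i)) a₀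
          ∉ -(@interior _ (τ i) (S i)) :=
  stmt10_general p hmono τ htag hsmul hlc hcont S hcone hconv hnc A hAne hcc
end
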